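/- arXiv:math/0408272 — 2 statements merged into one kernel-verified Lean document; each statement's English description precedes it below -/
import Mathlib

section
/- For natural numbers m and n with 2 ≤ m ≤ n−1, the alternating sum ∑_{s=0}^{⌊m/2⌋} (−1)^s · C(n−1,s) · C(n+m−2−2s, m−2s) equals C(n−1, m). -/
/-!
Compare the coefficients of `X ^ m` on both sides of
`(1 + X) ^ N = (1 - X ^ 2) ^ N * (1 - X)⁻ᴺ` with `N = n - 1`: on the right,
`(1 - X ^ 2) ^ N` contributes `(-1) ^ s * C(N, s)` in degree `2 * s`, and the coefficient of
`X ^ k` in `(1 - X)⁻ᴺ` is `multichoose N k = C(N + k - 1, k)`.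
-/

open PowerSeries Finset

namespace PowerSeries

variable {R : Type*} [CommRing R]

theorem coeff_invOneSubPow_val (d k : ℕ) :
    coeff k (invOneSubPow R d).val = d.multichoose k := by
  cases d with
  | zero => cases k <;> simp [invOneSubPow_zero, coeff_one]
  | succ d =>
    simp [invOneSubPow_val_succ_eq_mk_add_choose, Nat.multichoose_eq, Nat.choose_symm_add]

theorem coeff_one_add_X_pow (N k : ℕ) : coeff k ((1 + X : R⟦X⟧) ^ N) = N.choose k := by
  have h : ((1 + X : R⟦X⟧) ^ N) = ((1 + Polynomial.X : Polynomial R) ^ N : Polynomial R) := by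
    simp
  rw [h, Polynomial.coeff_coe, Polynomial.coeff_one_add_X_pow]

theorem one_add_X_pow_eq_one_sub_X_sq_pow_mul_invOneSubPow (N : ℕ) :
    (1 + X : R⟦X⟧) ^ N = (1 - X ^ 2) ^ N * (invOneSubPow R N).val := by
  rw [show (1 - X ^ 2 : R⟦X⟧) = (1 + X) * (1 - X) by ring, mul_pow, mul_assoc,
    ← invOneSubPow_inv_eq_one_sub_pow, (invOneSubPow R N).inv_val, mul_one]

theorem coeff_one_sub_X_sq_pow_mul (f : R⟦X⟧) (N m : ℕ) :
    coeff m ((1 - X ^ 2) ^ N * f) =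
      ∑ s ∈ range (m / 2 + 1), (-1) ^ s * N.choose s * coeff (m - 2 * s) f := by
  set g : ℕ → R := fun s => (-1) ^ s * N.choose s * if 2 * s ≤ m then coeff (m - 2 * s) f else 0
  have hg : ∀ s ≥ min (N + 1) (m / 2 + 1), g s = 0 := by
    intro s hs
    rcases min_le_iff.mp hs with hN | hm
    · simp [g, Nat.choose_eq_zero_of_lt (by omega : N < s)]
    · simp [g, show ¬ 2 * s ≤ m by omega]
  have hsum : coeff m ((1 - X ^ 2) ^ N * f) = ∑ s ∈ range (N + 1), g s := by
    rw [show (1 - X ^ 2 : R⟦X⟧) = -X ^ 2 + 1 by ring, add_pow, sum_mul, map_sum]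
    refine sum_congr rfl fun s _ => ?_
    rw [show (-X ^ 2) ^ s * 1 ^ (N - s) * (N.choose s : R⟦X⟧) * f =
        X ^ (2 * s) * (C ((-1) ^ s * N.choose s : R) * f) by
          simp only [map_mul, map_pow, map_neg, map_one, map_natCast]; ring,
      coeff_X_pow_mul', coeff_C_mul]
    split_ifs <;> simp [g, *]
  rw [hsum, eventually_constant_sum hg (min_le_left _ _),
    ← eventually_constant_sum hg (min_le_right _ _)]
  refine sum_congr rfl fun s hs => ?_
  simp [g, show 2 * s ≤ m by have := mem_range.mp hs; omega]

end PowerSeries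

theorem sum_neg_one_pow_mul_choose_mul_multichoose (N m : ℕ) :
    ∑ s ∈ range (m / 2 + 1), (-1 : ℤ) ^ s * N.choose s * N.multichoose (m - 2 * s) =
      N.choose m := by
  have h := congrArg (coeff m) (one_add_X_pow_eq_one_sub_X_sq_pow_mul_invOneSubPow (R := ℤ) N)
  rw [coeff_one_add_X_pow, coeff_one_sub_X_sq_pow_mul] at h
  simpa only [coeff_invOneSubPow_val] using h.symm

theorem alternating_sum_almost_full_resonance_general (m n : ℕ) (hmn : m ≤ n - 1) :
    ∑ s ∈ Finset.range (m / 2 + 1),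
        (-1 : ℤ) ^ s * (Nat.choose (n - 1) s : ℤ)
          * (Nat.choose (n + m - 2 - 2 * s) (m - 2 * s) : ℤ)
      = (Nat.choose (n - 1) m : ℤ) := by
  rw [← sum_neg_one_pow_mul_choose_mul_multichoose]
  refine sum_congr rfl fun s hs => ?_
  have hs : s ≤ m / 2 := Nat.lt_succ_iff.mp (mem_range.mp hs)
  rw [Nat.multichoose_eq, show n - 1 + (m - 2 * s) - 1 = n + m - 2 - 2 * s by omega]

/-- I_{m,n}(n−1) = C(n−1,m): case of n−1 resonant exponents. -/
theorem alternating_sum_almost_full_resonance (m n : ℕ) (hm : 2 ≤ m) (hmn : m ≤ n - 1) :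
    ∑ s ∈ Finset.range (m / 2 + 1),
        (-1 : ℤ) ^ s * (Nat.choose (n - 1) s : ℤ)
          * (Nat.choose (n + m - 2 - 2 * s) (m - 2 * s) : ℤ)
      = (Nat.choose (n - 1) m : ℤ) :=
  alternating_sum_almost_full_resonance_general m n hmn
end

section
/- Let j be a natural number and a, b, c real numbers with a ≠ b and with all relevant Pochhammer denominators nonzero. Then the terminating sum ∑_{k=0}^{j} [(a)_k (b)_k (−j)_k]/[(c)_k (a+b−c+2−j)_k · k!] equals [a/(a−b)] · (c−a−1)_j (c−b)_j / [(c)_j (c−a−b−1)_j] + [b/(b−a)] · (c−a)_j (c−b−1)_j / [(c)_j (c−a−b−1)_j]. -/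
/-!
Writing `(-j)_k = (-1)^k k! C(j,k)` and `(y)_j = (-1)^k (1-y-j)_k (y)_{j-k}` for
`y = c-a-b-1` turns the ₃F₂ into the polynomial sum
`∑ C(j,k) (a)_k (b)_k (c+k)_{j-k} (c-a-b-1)_{j-k}` divided by `(c)_j (c-a-b-1)_j`.
In the same cleared form, Pfaff–Saalschütz reads
`∑ C(n,k) (a)_k (b)_k (c+k)_{n-k} (c-a-b)_{n-k} = (c-a)_n (c-b)_n`, and by the contiguity
relation `a (a+1)_k (b)_k - b (a)_k (b+1)_k = (a-b) (a)_k (b)_k`, `(a-b)` times our sum is the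
difference of the Pfaff–Saalschütz sums at `(a+1, b)` and `(a, b+1)`, both of which have
`c-(a+1)-b = c-a-b-1`.
-/

/-- Rising factorial (Pochhammer symbol) on ℝ. -/
def poch (x : ℝ) : ℕ → ℝ
  | 0 => 1
  | k + 1 => poch x k * (x + k)

open Finset

section Pochhammer

open Polynomial

lemma poch_eq_eval_ascPochhammer (x : ℝ) (k : ℕ) : poch x k = (ascPochhammer ℝ k).eval x := by
  induction k with
  | zero => simp [poch]
  | succ k ih => rw [poch, ih, ascPochhammer_succ_eval]

@[simp] lemma poch_zero (x : ℝ) : poch x 0 = 1 := rfl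

lemma poch_succ (x : ℝ) (k : ℕ) : poch x (k + 1) = poch x k * (x + k) := rfl

lemma poch_succ_left (x : ℝ) (k : ℕ) : poch x (k + 1) = x * poch (x + 1) k := by
  simp [poch_eq_eval_ascPochhammer, ascPochhammer_succ_left, eval_comp]

lemma poch_add (x : ℝ) (m n : ℕ) : poch x (m + n) = poch x m * poch (x + m) n := by
  simp [poch_eq_eval_ascPochhammer, ← ascPochhammer_mul, eval_comp]

lemma poch_eq_neg_one_pow_mul (x : ℝ) (n : ℕ) : poch x n = (-1) ^ n * poch (1 - x - n) n := by
  have := ascPochhammer_eval_neg_eq_descPochhammer ℝ (-x) n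
  rw [neg_neg, descPochhammer_eval_eq_ascPochhammer] at this
  rw [poch_eq_eval_ascPochhammer, poch_eq_eval_ascPochhammer, this]
  ring_nf

lemma poch_neg_natCast (j k : ℕ) : poch (-(j : ℝ)) k = (-1) ^ k * k.factorial * j.choose k := by
  rw [poch_eq_eval_ascPochhammer, ascPochhammer_eval_neg_eq_descPochhammer,
    descPochhammer_eval_eq_descFactorial, Nat.descFactorial_eq_factorial_mul_choose]
  push_cast; ring

lemma poch_eq_neg_one_pow_mul_poch_mul_poch_sub (y : ℝ) {j k : ℕ} (hk : k ≤ j) :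
    poch y j = (-1) ^ k * poch (1 - y - j) k * poch y (j - k) := by
  obtain ⟨m, rfl⟩ := Nat.exists_eq_add_of_le' hk
  rw [Nat.add_sub_cancel, poch_add, poch_eq_neg_one_pow_mul (y + m)]
  push_cast; ring_nf

end Pochhammer

def saalschuetzTerm (n : ℕ) (a b c : ℝ) (k : ℕ) : ℝ :=
  n.choose k * (poch a k * poch b k * poch (c + k) (n - k) * poch (c - a - b) (n - k))

section Telescoping

/- With `t = saalschuetzTerm n a b (c + 1)` and `h k = (a + k) (b + k) t k`, the summand of
order `n + 1` is `(c - a) (c - b) t k + h (k - 1) - h k` (without the `h (k - 1)` at `k = 0`),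
so its sum telescopes. -/

variable (n : ℕ) (a b c : ℝ)

lemma saalschuetzTerm_succ_zero :
    saalschuetzTerm (n + 1) a b c 0
      = ((c - a) * (c - b) - a * b) * saalschuetzTerm n a b (c + 1) 0 := by
  simp only [saalschuetzTerm, Nat.choose_zero_right, poch_zero, Nat.sub_zero, Nat.cast_zero,
    add_zero, poch_succ_left, show c + 1 - a - b = c - a - b + 1 by ring]
  ring

lemma saalschuetzTerm_succ_self :
    saalschuetzTerm (n + 1) a b c (n + 1)
      = (a + n) * (b + n) * saalschuetzTerm n a b (c + 1) n := by
  simp only [saalschuetzTerm, Nat.choose_self, Nat.sub_self, poch_zero, poch_succ]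
  ring

lemma saalschuetzTerm_succ_succ {k : ℕ} (hk : k < n) :
    saalschuetzTerm (n + 1) a b c (k + 1)
      = (c - a) * (c - b) * saalschuetzTerm n a b (c + 1) (k + 1)
        - (a + (k + 1 : ℕ)) * (b + (k + 1 : ℕ)) * saalschuetzTerm n a b (c + 1) (k + 1)
        + (a + k) * (b + k) * saalschuetzTerm n a b (c + 1) k := by
  obtain ⟨m, rfl⟩ := Nat.exists_eq_add_of_lt hk
  have hpascal := Nat.choose_succ_succ' (k + m + 1) k
  have hchoose := Nat.choose_succ_right_eq (k + m + 1) k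
  rw [show k + m + 1 - k = m + 1 by omega] at hchoose
  have hchoose' : ((k + m + 1).choose (k + 1) : ℝ) * (k + 1)
      = (k + m + 1).choose k * (m + 1) := by
    exact_mod_cast hchoose
  simp only [saalschuetzTerm, show k + m + 1 + 1 - (k + 1) = m + 1 by omega,
    show k + m + 1 - (k + 1) = m by omega, show k + m + 1 - k = m + 1 by omega, hpascal,
    show c + 1 - a - b = c - a - b + 1 by ring]
  rw [poch_succ a k, poch_succ b k, poch_succ_left (c + _) m, poch_succ_left (c - a - b) m,
    poch_succ (c - a - b + 1) m, poch_succ_left (c + 1 + _) m]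
  push_cast
  rw [show c + (k + 1) + 1 = c + 1 + (k + 1) by ring, show c + 1 + k + 1 = c + 1 + (k + 1) by ring]
  linear_combination (poch a k * poch b k * (a + k) * (b + k) * poch (c + 1 + (k + 1)) m
    * poch (c - a - b + 1) m * (c + k + 1)) * hchoose'

lemma sum_saalschuetzTerm_succ :
    ∑ k ∈ range (n + 2), saalschuetzTerm (n + 1) a b c k
      = (c - a) * (c - b) * ∑ k ∈ range (n + 1), saalschuetzTerm n a b (c + 1) k := by
  set t := saalschuetzTerm n a b (c + 1)
  set h : ℕ → ℝ := fun k => (a + k) * (b + k) * t k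
  have hinner : ∑ k ∈ range n, saalschuetzTerm (n + 1) a b c (k + 1)
      = (c - a) * (c - b) * ∑ k ∈ range n, t (k + 1) - (h n - h 0) := by
    rw [← sum_range_sub, mul_sum, ← sum_sub_distrib]
    refine sum_congr rfl fun k hk => ?_
    rw [saalschuetzTerm_succ_succ n a b c (mem_range.mp hk)]
    ring
  rw [sum_range_succ, sum_range_succ', sum_range_succ' t, hinner, saalschuetzTerm_succ_zero,
    saalschuetzTerm_succ_self]
  ring

end Telescoping

theorem pfaff_saalschuetz (n : ℕ) (a b c : ℝ) :
    ∑ k ∈ range (n + 1), saalschuetzTerm n a b c k = poch (c - a) n * poch (c - b) n := by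
  induction n generalizing c with
  | zero => simp [saalschuetzTerm]
  | succ n ih =>
    rw [sum_saalschuetzTerm_succ, ih, poch_succ_left (c - a), poch_succ_left (c - b)]
    ring_nf

lemma poch_contiguity (a b : ℝ) (k : ℕ) :
    a * poch (a + 1) k * poch b k - b * poch a k * poch (b + 1) k
      = (a - b) * poch a k * poch b k := by
  have ha : a * poch (a + 1) k = poch a k * (a + k) := by rw [← poch_succ_left, poch_succ]
  have hb : b * poch (b + 1) k = poch b k * (b + k) := by rw [← poch_succ_left, poch_succ]
  linear_combination poch b k * ha - poch a k * hb

lemma saalschuetz_plus_one_cleared (j : ℕ) (a b c : ℝ) :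
    (a - b) * ∑ k ∈ range (j + 1), j.choose k *
        (poch a k * poch b k * poch (c + k) (j - k) * poch (c - a - b - 1) (j - k))
      = a * (poch (c - a - 1) j * poch (c - b) j)
        - b * (poch (c - a) j * poch (c - b - 1) j) := by
  rw [show c - a - 1 = c - (a + 1) by ring, show c - b - 1 = c - (b + 1) by ring,
    ← pfaff_saalschuetz, ← pfaff_saalschuetz, mul_sum, mul_sum, mul_sum, ← sum_sub_distrib]
  refine sum_congr rfl fun k _ => ?_
  rw [saalschuetzTerm, saalschuetzTerm, show c - (a + 1) - b = c - a - b - 1 by ring,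
    show c - a - (b + 1) = c - a - b - 1 by ring]
  linear_combination (-(j.choose k : ℝ) * poch (c + k) (j - k) * poch (c - a - b - 1) (j - k))
    * poch_contiguity a b k

lemma saalschuetz_plus_one_summand_eq {j k : ℕ} (hk : k ≤ j) (a b c y : ℝ)
    (hc : poch c j ≠ 0) (hy : poch y j ≠ 0) :
    poch a k * poch b k * poch (-(j : ℝ)) k / (poch c k * poch (1 - y - j) k * k.factorial)
      = j.choose k * (poch a k * poch b k * poch (c + k) (j - k) * poch y (j - k))
        / (poch c j * poch y j) := by
  have hy_split := poch_eq_neg_one_pow_mul_poch_mul_poch_sub y hk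
  obtain ⟨m, rfl⟩ := Nat.exists_eq_add_of_le hk
  rw [poch_add] at hc ⊢
  rw [hy_split, Nat.add_sub_cancel_left] at hy ⊢
  obtain ⟨hck, hckm⟩ := mul_ne_zero_iff.mp hc
  obtain ⟨hxk, hym⟩ := mul_ne_zero_iff.mp hy
  have hsign : ((-1 : ℝ) ^ k) ^ 2 = 1 := by rw [← pow_mul, mul_comm, pow_mul]; norm_num
  rw [poch_neg_natCast]
  field_simp
  rw [hsign, mul_one]

theorem saalschuetz_plus_one_general (j : ℕ) (a b c : ℝ) (hab : a ≠ b)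
    (hc : poch c j ≠ 0)
    (hcab : poch (c - a - b - 1) j ≠ 0) :
    ∑ k ∈ Finset.range (j + 1),
        poch a k * poch b k * poch (-(j : ℝ)) k
          / (poch c k * poch (a + b - c + 2 - (j : ℝ)) k * (Nat.factorial k : ℝ))
      = a / (a - b) * (poch (c - a - 1) j * poch (c - b) j
            / (poch c j * poch (c - a - b - 1) j))
        + b / (b - a) * (poch (c - a) j * poch (c - b - 1) j
            / (poch c j * poch (c - a - b - 1) j)) := by
  have hsum := saalschuetz_plus_one_cleared j a b c
  rw [mul_comm, ← eq_div_iff (sub_ne_zero.mpr hab)] at hsum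
  rw [show a + b - c + 2 - (j : ℝ) = 1 - (c - a - b - 1) - j by ring,
    Finset.sum_congr rfl fun k hk => saalschuetz_plus_one_summand_eq
      (Nat.lt_succ_iff.mp (Finset.mem_range.mp hk)) a b c _ hc hcab,
    ← Finset.sum_div, hsum]
  have : b - a ≠ 0 := sub_ne_zero.mpr hab.symm
  field_simp
  ring

/-- Evaluation of a terminating ₃F₂ at 1 exceeding Saalschützian balance by 1. -/
theorem saalschuetz_plus_one (j : ℕ) (a b c : ℝ) (hab : a ≠ b)
    (hc : poch c j ≠ 0)
    (hd : ∀ k ≤ j, poch (a + b - c + 2 - (j : ℝ)) k ≠ 0)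
    (hcab : poch (c - a - b - 1) j ≠ 0) :
    ∑ k ∈ Finset.range (j + 1),
        poch a k * poch b k * poch (-(j : ℝ)) k
          / (poch c k * poch (a + b - c + 2 - (j : ℝ)) k * (Nat.factorial k : ℝ))
      = a / (a - b) * (poch (c - a - 1) j * poch (c - b) j
            / (poch c j * poch (c - a - b - 1) j))
        + b / (b - a) * (poch (c - a) j * poch (c - b - 1) j
            / (poch c j * poch (c - a - b - 1) j)) :=
  saalschuetz_plus_one_general j a b c hab hc hcab
end
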